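/- Assume that bar(I) is contained in I, where I is defined as below. If C in V satisfies bar(C) - C in I, then for every g in Z[X]^{W0} one has bar(g . C) - g . C in I; that is, the class of g . C in F_l = V/I is fixed by the induced bar involution. (Bar-invariance of s_{lambda1*} . C_{lambda0}; step (a) of the proof of Theorem 1.2) -/

import Mathlib

open Finsupp LaurentPolynomial

noncomputable section

/-- The ring `K = ℤ[t^{1/2}, t^{-1/2}]`: Laurent polynomials over `ℤ` in the
variable `T = t^{1/2}`. -/
abbrev K : Type := LaurentPolynomial ℤ

/-- The element `t^{1/2}` of `K`. -/
def tHalf : K := T 1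

/-- The bar involution of `K`, determined by `t^{1/2} ↦ t^{-1/2}`. -/
def conjK : K →+* K := (LaurentPolynomial.invert (R := ℤ)).toRingHom

/-- `V`: the free `K`-module with basis `{|λ⟩ : λ ∈ a_ℤ^*}` indexed by the weight
lattice `Λ`. -/
abbrev V (Λ : Type) : Type := Λ →₀ K

/-- The basis element `|λ⟩` of `V`. -/
def ket {Λ : Type} (lam : Λ) : V Λ := Finsupp.single lam 1

/-- The data of (the weight lattice of) a reduced finite crystallographic root
system: the weight lattice `Λ = a_ℤ^*`, the (finite) Weyl group `W = W₀` acting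
on `Λ` through `σ`, the simple reflections `s i`, the simple roots `α i`, the
pairings `pair i = ⟨·, α_i^∨⟩` with the simple coroots, the finite set
`posRoots` of pairings `⟨·, α^∨⟩` with the coroots `α^∨` of the positive roots
`α ∈ R⁺`, the half-sum `ρ` of the positive roots (assumed to lie in `Λ`), the
longest element `w0` (of length `posRoots.card`), and the sign character `det`. -/
structure RootData (Λ W : Type) [AddCommGroup Λ] [Group W] [Fintype W] where
  n : ℕ
  σ : W →* Multiplicative (AddAut Λ)
  s : Fin n → W
  α : Fin n → Λ
  pair : Fin n → Λ →+ ℤ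
  posRoots : Finset (Λ →+ ℤ)
  ρ : Λ
  w0 : W
  det : W →* ℤˣ
  /-- `s i` acts on `Λ` as the reflection in the simple root `α i`. -/
  reflect : ∀ (i : Fin n) (lam : Λ), Multiplicative.toAdd (σ (s i)) lam = lam - pair i lam • α i
  /-- crystallographic normalization `⟨α_i, α_i^∨⟩ = 2`. -/
  pair_alpha_self : ∀ i : Fin n, pair i (α i) = 2
  /-- the simple reflections are involutions. -/
  s_sq : ∀ i : Fin n, s i * s i = 1
  /-- `W₀` is generated by the simple reflections. -/
  gen_s : Subgroup.closure (Set.range s) = ⊤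
  /-- `⟨ρ, α_i^∨⟩ = 1` for every simple coroot. -/
  pair_rho : ∀ i : Fin n, pair i ρ = 1
  /-- each simple coroot is the coroot of a positive root. -/
  pair_mem : ∀ i : Fin n, pair i ∈ posRoots
  /-- the Weyl group permutes the (co)roots up to sign. -/
  roots_perm : ∀ (w : W), ∀ f ∈ posRoots,
    (∃ g ∈ posRoots, ∀ lam, f (Multiplicative.toAdd (σ w) lam) = g lam) ∨
    (∃ g ∈ posRoots, ∀ lam, f (Multiplicative.toAdd (σ w) lam) = - g lam)
  /-- `w0` sends every positive root to a negative root (so `w0` is the longest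
  element, of length `posRoots.card`). -/
  w0_neg : ∀ f ∈ posRoots, ∃ g ∈ posRoots, ∀ lam, f (Multiplicative.toAdd (σ w0) lam) = - g lam
  /-- `det` is the sign character. -/
  det_s : ∀ i : Fin n, det (s i) = -1

namespace RootData

variable {Λ W : Type} [AddCommGroup Λ] [Group W] [Fintype W]

/-- The dot action `w ∘ λ = w(λ + ρ) - ρ`. -/
def dot (D : RootData Λ W) (w : W) (lam : Λ) : Λ := Multiplicative.toAdd (D.σ w) (lam + D.ρ) - D.ρ

/-- `λ^{(1)} = λ - j • α_i`, where `⟨λ + ρ, α_i^∨⟩ = k l + j` with `j ∈ {0, …, l-1}`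
(relative to the index `i`). -/
def lamOne (D : RootData Λ W) (l : ℕ) (i : Fin D.n) (lam : Λ) : Λ :=
  lam - (D.pair i (lam + D.ρ) % (l : ℤ)) • D.α i

/-- A weight `λ` is dominant when `⟨λ + ρ, α_i^∨⟩ > 0` for all `i`. -/
def dominant (D : RootData Λ W) (lam : Λ) : Prop :=
  ∀ i : Fin D.n, 0 < D.pair i (lam + D.ρ)

/-- `λ₀ ∈ Π_l`: an `l`-restricted dominant weight. -/
def restricted (D : RootData Λ W) (l : ℕ) (lam : Λ) : Prop :=
  D.dominant lam ∧ ∀ i : Fin D.n, D.pair i lam ≤ (l : ℤ) - 1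

/-- The `K`-submodule `I` of `V` spanned by the straightening elements
(a), (b), (c). -/
def Idl (D : RootData Λ W) (l : ℕ) : Submodule K (V Λ) :=
  Submodule.span K
    ({x | ∃ (i : Fin D.n) (lam : Λ),
        (∃ k : ℤ, 0 ≤ k ∧ D.pair i (lam + D.ρ) = k * l) ∧
        x = ket (D.dot (D.s i) lam) + ket lam} ∪
     {x | ∃ (i : Fin D.n) (lam : Λ),
        0 < D.pair i (lam + D.ρ) ∧ D.pair i (lam + D.ρ) < (l : ℤ) ∧
        x = ket (D.dot (D.s i) lam) + tHalf • ket lam} ∪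
     {x | ∃ (i : Fin D.n) (lam : Λ),
        (l : ℤ) < D.pair i (lam + D.ρ) ∧ ¬ ((l : ℤ) ∣ D.pair i (lam + D.ρ)) ∧
        x = ket (D.dot (D.s i) lam) + tHalf • ket (D.dot (D.s i) (D.lamOne l i lam)) +
            ket (D.lamOne l i lam) + tHalf • ket lam})

/-- The operator `X^μ · : V → V` of the level `-(l+h)` action:
`X^μ · |γ⟩ = |γ - l w0(μ)⟩`. -/
def opX (D : RootData Λ W) (l : ℕ) (mu : Λ) : V Λ →ₗ[K] V Λ :=
  Finsupp.lmapDomain K K (fun gam => gam - l • Multiplicative.toAdd (D.σ D.w0) mu)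

/-- The level `-(l+h)` action of an element `g` of the group algebra `K[X]`
(with `K`-coefficients) on `V`. -/
def actKX (D : RootData Λ W) (l : ℕ) (g : Λ →₀ K) (v : V Λ) : V Λ :=
  g.sum fun mu c => c • (D.opX l mu v)

/-- The level `-(l+h)` action of an element `g` of `ℤ[X]` on `V`. -/
def actZX (D : RootData Λ W) (l : ℕ) (g : Λ →₀ ℤ) (v : V Λ) : V Λ :=
  g.sum fun mu c => c • (D.opX l mu v)

/-- `N_λ = #{α ∈ R⁺ : ⟨λ + ρ, α^∨⟩ ∈ lℤ}`. -/
def Ncount (D : RootData Λ W) (l : ℕ) (lam : Λ) : ℕ :=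
  (D.posRoots.filter (fun f => (l : ℤ) ∣ f (lam + D.ρ))).card

/-- The coefficient `(-1)^{l(w0)} (t^{-1/2})^{l(w0) - N_λ}` appearing in the bar
involution, where `l(w0) = Card R⁺`. -/
def barCoef (D : RootData Λ W) (l : ℕ) (lam : Λ) : K :=
  ((-1 : K) ^ D.posRoots.card) * T ((D.Ncount l lam : ℤ) - (D.posRoots.card : ℤ))

/-- The bar involution of `V`:
`bar(c|λ⟩) = c̄ (-1)^{l(w0)} (t^{-1/2})^{l(w0)-N_λ} |w0 ∘ λ⟩`. -/
def barV (D : RootData Λ W) (l : ℕ) (v : V Λ) : V Λ :=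
  v.sum fun lam c => (conjK c * D.barCoef l lam) • ket (D.dot D.w0 lam)

/-- `V⁺`: the `ℤ[t^{1/2}]`-span of the `|μ⟩` inside `V`, i.e. the elements all
of whose coefficients are polynomials in `t^{1/2}`. -/
def inVplus {Λ : Type} (b : V Λ) : Prop :=
  ∀ (mu : Λ) (m : ℤ), m < 0 → AddMonoidAlgebra.coeff (b mu) m = 0

/-- Membership in `I + t^{1/2} V⁺`. -/
def inIplus (D : RootData Λ W) (l : ℕ) (x : V Λ) : Prop :=
  ∃ a ∈ D.Idl l, ∃ b : V Λ, inVplus b ∧ x = a + tHalf • b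

/-- The Weyl numerator `∑_{w ∈ W₀} det(w) X^{w ν}` in `K[X]`. -/
def weylNumer (D : RootData Λ W) (nu : Λ) : AddMonoidAlgebra K Λ :=
  ∑ w : W, ((D.det w : ℤˣ) : ℤ) • AddMonoidAlgebra.single (Multiplicative.toAdd (D.σ w) nu) (1 : K)

/-- `g` is the Weyl character `s_ν ∈ ℤ[X]^{W₀} ⊆ K[X]`: it has integer
coefficients, is `W₀`-invariant, and satisfies the Weyl character formula
`(∑_w det(w) X^{wρ}) · s_ν = ∑_w det(w) X^{w(ν+ρ)}`. -/
def IsWeylChar (D : RootData Λ W) (nu : Λ) (g : AddMonoidAlgebra K Λ) : Prop :=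
  (∀ mu : Λ, ∃ z : ℤ, AddMonoidAlgebra.coeff g mu = (z : K)) ∧
  (∀ (w : W) (mu : Λ), AddMonoidAlgebra.coeff g (Multiplicative.toAdd (D.σ w) mu) = AddMonoidAlgebra.coeff g mu) ∧
  D.weylNumer D.ρ * g = D.weylNumer (nu + D.ρ)

end RootData

end

/-!
Since `bar (X^μ v) = X^{w₀ μ} bar v`, `bar` commutes with the action of a `W₀`-invariant
`g`, so `bar (g C) - g C = g (bar C - C)` and it suffices that `g · I ⊆ I`. The operator
`X^μ` shifts weights by `ν = -l w₀ μ`, and `μ ↦ (w₀⁻¹ s_i w₀) μ` preserves the coefficients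
of `g` while replacing `ν` by `r ν`, where `r = s_i` acts linearly. As
`s_i ∘ (λ + ν) = s_i ∘ λ + r ν`, the sum of the shifts by `ν` and by `r ν` of a straightening
element at `i` is a sum of such elements, and a shift by `ν = r ν` maps it to one. For (b)
this needs the four-term element (c) at weights whose pairing with `α_i^∨` is merely
`≢ 0 mod l`; it still lies in `I`, being twice an element (b), an element (c), or, after the
symmetry `X ↦ s_i ∘ (X - j α_i)`, an element (c) again.
-/

theorem Submodule.sum_mem_of_involution {R M ι : Type*} [Ring R] [AddCommGroup M] [Module R M]
    (p : Submodule R M) {s : Finset ι} {f : ι → M} (u : ι → ι) (hu : ∀ a ∈ s, u a ∈ s)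
    (huu : ∀ a ∈ s, u (u a) = a) (hpair : ∀ a ∈ s, f a + f (u a) ∈ p)
    (hfix : ∀ a ∈ s, u a = a → f a ∈ p) : ∑ a ∈ s, f a ∈ p := by
  rw [← Submodule.Quotient.mk_eq_zero, ← p.mkQ_apply, map_sum]
  refine Finset.sum_involution (fun a _ => u a) (fun a ha => ?_) (fun a ha hne hfx => hne ?_)
    hu huu
  · rw [← map_add, p.mkQ_apply, Submodule.Quotient.mk_eq_zero]
    exact hpair a ha
  · rw [p.mkQ_apply, Submodule.Quotient.mk_eq_zero]
    exact hfix a ha hfx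

noncomputable section

namespace RootData

variable {Λ W : Type} [AddCommGroup Λ] [Group W] [Fintype W] (D : RootData Λ W)

def act (w : W) : Λ ≃+ Λ := Multiplicative.toAdd (D.σ w)

lemma act_mul_apply (w w' : W) (μ : Λ) : D.act (w * w') μ = D.act w (D.act w' μ) := by
  simp only [act, map_mul, toAdd_mul, AddAut.add_apply]

lemma act_one_apply (μ : Λ) : D.act 1 μ = μ := by
  simp only [act, map_one, toAdd_one, AddAut.zero_apply]

lemma act_s_apply (i : Fin D.n) (μ : Λ) : D.act (D.s i) μ = μ - D.pair i μ • D.α i :=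
  D.reflect i μ

lemma act_s_act_s (i : Fin D.n) (μ : Λ) : D.act (D.s i) (D.act (D.s i) μ) = μ := by
  rw [← act_mul_apply, D.s_sq, act_one_apply]

lemma pair_act_s (i : Fin D.n) (μ : Λ) : D.pair i (D.act (D.s i) μ) = -D.pair i μ := by
  rw [act_s_apply, map_sub, map_zsmul, D.pair_alpha_self, smul_eq_mul]
  ring

lemma act_s_eq_self_iff (i : Fin D.n) (μ : Λ) : D.act (D.s i) μ = μ ↔ D.pair i μ = 0 := by
  rw [act_s_apply, sub_eq_self]
  constructor
  · intro h
    have h2 := congrArg (D.pair i) h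
    rw [map_zsmul, D.pair_alpha_self, map_zero, smul_eq_mul] at h2
    omega
  · intro h
    rw [h, zero_smul]

lemma dot_add (w : W) (lam ν : Λ) : D.dot w (lam + ν) = D.dot w lam + D.act w ν := by
  change D.act w (lam + ν + D.ρ) - D.ρ = D.act w (lam + D.ρ) - D.ρ + D.act w ν
  rw [add_right_comm, map_add]
  abel

lemma dot_s_eq (i : Fin D.n) (lam : Λ) :
    D.dot (D.s i) lam = lam - D.pair i (lam + D.ρ) • D.α i := by
  change D.act (D.s i) (lam + D.ρ) - D.ρ = _
  rw [act_s_apply]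
  abel

lemma dot_s_dot_s (i : Fin D.n) (lam : Λ) : D.dot (D.s i) (D.dot (D.s i) lam) = lam := by
  change D.act (D.s i) (D.act (D.s i) (lam + D.ρ) - D.ρ + D.ρ) - D.ρ = lam
  rw [sub_add_cancel, act_s_act_s, add_sub_cancel_right]

lemma pair_add_add_rho (i : Fin D.n) (lam ν : Λ) :
    D.pair i (lam + ν + D.ρ) = D.pair i (lam + D.ρ) + D.pair i ν := by
  rw [add_right_comm, map_add]

lemma pair_sub_smul_alpha_add_rho (i : Fin D.n) (lam : Λ) (j : ℤ) :
    D.pair i (lam - j • D.α i + D.ρ) = D.pair i (lam + D.ρ) - 2 * j := by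
  rw [sub_add_eq_add_sub, map_sub, map_zsmul, D.pair_alpha_self, smul_eq_mul, mul_comm]

lemma pair_dot_s_add_rho (i : Fin D.n) (lam : Λ) :
    D.pair i (D.dot (D.s i) lam + D.ρ) = -D.pair i (lam + D.ρ) := by
  change D.pair i (D.act (D.s i) (lam + D.ρ) - D.ρ + D.ρ) = _
  rw [sub_add_cancel, pair_act_s]

lemma dot_s_add (i : Fin D.n) (lam ν : Λ) :
    D.dot (D.s i) lam + ν = D.dot (D.s i) (lam + D.act (D.s i) ν) := by
  rw [dot_add, act_s_act_s]

def relA (i : Fin D.n) (lam : Λ) : V Λ := ket (D.dot (D.s i) lam) + ket lam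

def relB (i : Fin D.n) (lam : Λ) : V Λ := ket (D.dot (D.s i) lam) + tHalf • ket lam

/-- The straightening element (c) at `λ` is `relC i λ j` for `j = ⟨λ + ρ, α_i^∨⟩ mod l`. -/
def relC (i : Fin D.n) (X : Λ) (j : ℤ) : V Λ :=
  ket (D.dot (D.s i) X) + tHalf • ket (D.dot (D.s i) (X - j • D.α i)) + ket (X - j • D.α i) +
    tHalf • ket X

lemma relA_dot_s (i : Fin D.n) (lam : Λ) : D.relA i (D.dot (D.s i) lam) = D.relA i lam := by
  rw [relA, dot_s_dot_s, add_comm, relA]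

lemma relC_dot_s_sub (i : Fin D.n) (X : Λ) (j : ℤ) :
    D.relC i (D.dot (D.s i) (X - j • D.α i)) j = D.relC i X j := by
  have hsub : D.dot (D.s i) (X - j • D.α i) - j • D.α i = D.dot (D.s i) X := by
    rw [dot_s_eq, dot_s_eq, pair_sub_smul_alpha_add_rho]
    module
  simp only [relC, hsub, dot_s_dot_s]
  abel

variable (l : ℕ)

lemma relA_mem {i : Fin D.n} {lam : Λ} (h : (l : ℤ) ∣ D.pair i (lam + D.ρ)) :
    D.relA i lam ∈ D.Idl l := by
  obtain ⟨k, hk⟩ := h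
  rcases le_or_gt 0 k with hk0 | hk0
  · exact Submodule.subset_span (Or.inl (Or.inl ⟨i, lam, ⟨k, hk0, by rw [hk, mul_comm]⟩, rfl⟩))
  · rw [← relA_dot_s]
    refine Submodule.subset_span (Or.inl (Or.inl ⟨i, D.dot (D.s i) lam, ⟨-k, by omega, ?_⟩, rfl⟩))
    rw [pair_dot_s_add_rho, hk]
    ring

lemma relB_mem {i : Fin D.n} {lam : Λ} (h₀ : 0 < D.pair i (lam + D.ρ))
    (hl : D.pair i (lam + D.ρ) < l) : D.relB i lam ∈ D.Idl l :=
  Submodule.subset_span (Or.inl (Or.inr ⟨i, lam, h₀, hl, rfl⟩))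

lemma relC_emod_mem {i : Fin D.n} {lam : Λ} (hl : (l : ℤ) < D.pair i (lam + D.ρ))
    (hdvd : ¬ (l : ℤ) ∣ D.pair i (lam + D.ρ)) :
    D.relC i lam (D.pair i (lam + D.ρ) % l) ∈ D.Idl l :=
  Submodule.subset_span (Or.inr ⟨i, lam, hl, hdvd, rfl⟩)

lemma relC_mem_of_pos {i : Fin D.n} {X : Λ} {j : ℤ}
    (hmod : D.pair i (X + D.ρ) % l = j) (hj : 0 < j) (hpos : 0 < D.pair i (X + D.ρ)) :
    D.relC i X j ∈ D.Idl l := by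
  rcases lt_trichotomy (D.pair i (X + D.ρ)) l with hlt | heq | hgt
  · have hpj : D.pair i (X + D.ρ) = j := by rw [← hmod, Int.emod_eq_of_lt hpos.le hlt]
    have hdot : D.dot (D.s i) X = X - j • D.α i := by rw [dot_s_eq, hpj]
    have hrelC : D.relC i X j = D.relB i X + D.relB i X := by
      simp only [relC, relB, ← hdot, dot_s_dot_s]
      abel
    rw [hrelC]
    exact add_mem (D.relB_mem l hpos hlt) (D.relB_mem l hpos hlt)
  · rw [heq, Int.emod_self] at hmod
    omega
  · have hdvd : ¬ (l : ℤ) ∣ D.pair i (X + D.ρ) := fun h => by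
      rw [Int.emod_eq_zero_of_dvd h] at hmod
      omega
    exact hmod ▸ D.relC_emod_mem l hgt hdvd

lemma relC_mem (hl : 0 < l) {i : Fin D.n} {X : Λ} {j : ℤ}
    (hmod : D.pair i (X + D.ρ) % l = j) (hj : 0 < j) : D.relC i X j ∈ D.Idl l := by
  rcases lt_trichotomy (D.pair i (X + D.ρ)) 0 with hneg | hzero | hpos
  · have hjl : j < l := hmod ▸ Int.emod_lt_of_pos _ (by exact_mod_cast hl)
    have hpair : D.pair i (D.dot (D.s i) (X - j • D.α i) + D.ρ) = 2 * j - D.pair i (X + D.ρ) := by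
      rw [pair_dot_s_add_rho, pair_sub_smul_alpha_add_rho]
      ring
    have hdiv := Int.emod_add_mul_ediv (D.pair i (X + D.ρ)) l
    rw [hmod] at hdiv
    have hmod' : (2 * j - D.pair i (X + D.ρ)) % l = j := by
      rw [show 2 * j - D.pair i (X + D.ρ) = j + l * -(D.pair i (X + D.ρ) / l) by linarith,
        Int.add_mul_emod_self_left, Int.emod_eq_of_lt hj.le hjl]
    rw [← relC_dot_s_sub]
    exact D.relC_mem_of_pos l (hpair ▸ hmod') hj (by omega)
  · rw [hzero, Int.zero_emod] at hmod
    omega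
  · exact D.relC_mem_of_pos l hmod hj hpos

def shift (ν : Λ) : V Λ →ₗ[K] V Λ := Finsupp.lmapDomain K K (· + ν)

lemma shift_ket (ν lam : Λ) : shift ν (ket lam) = ket (lam + ν) := by
  simp only [shift, ket, Finsupp.lmapDomain_apply, Finsupp.mapDomain_single]

lemma shift_relA_add_shift_act_s (i : Fin D.n) (lam ν : Λ) :
    shift ν (D.relA i lam) + shift (D.act (D.s i) ν) (D.relA i lam) =
      D.relA i (lam + ν) + D.relA i (lam + D.act (D.s i) ν) := by
  simp only [relA, map_add, shift_ket, dot_s_add, act_s_act_s]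
  abel

lemma shift_relB_add_shift_act_s (i : Fin D.n) (lam ν : Λ) :
    shift ν (D.relB i lam) + shift (D.act (D.s i) ν) (D.relB i lam) =
      D.relC i (lam + ν) (D.pair i (lam + D.ρ)) := by
  have h : lam + ν - D.pair i (lam + D.ρ) • D.α i = D.dot (D.s i) (lam + D.act (D.s i) ν) := by
    rw [← dot_s_add, dot_s_eq]
    abel
  rw [relC, h, dot_s_dot_s]
  simp only [relB, map_add, map_smul, shift_ket, dot_s_add, act_s_act_s]
  abel

lemma shift_relC_add_shift_act_s (i : Fin D.n) (X ν : Λ) (j : ℤ) :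
    shift ν (D.relC i X j) + shift (D.act (D.s i) ν) (D.relC i X j) =
      D.relC i (X + ν) j + D.relC i (X + D.act (D.s i) ν) j := by
  simp only [relC, map_add, map_smul, shift_ket, dot_s_add, act_s_act_s, sub_add_eq_add_sub]
  abel

lemma shift_relA_of_pair_eq_zero {i : Fin D.n} {ν : Λ} (hν : D.pair i ν = 0) (lam : Λ) :
    shift ν (D.relA i lam) = D.relA i (lam + ν) := by
  simp only [relA, map_add, shift_ket, dot_s_add, (D.act_s_eq_self_iff i ν).2 hν]

lemma shift_relB_of_pair_eq_zero {i : Fin D.n} {ν : Λ} (hν : D.pair i ν = 0) (lam : Λ) :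
    shift ν (D.relB i lam) = D.relB i (lam + ν) := by
  simp only [relB, map_add, map_smul, shift_ket, dot_s_add, (D.act_s_eq_self_iff i ν).2 hν]

lemma shift_relC_of_pair_eq_zero {i : Fin D.n} {ν : Λ} (hν : D.pair i ν = 0) (X : Λ) (j : ℤ) :
    shift ν (D.relC i X j) = D.relC i (X + ν) j := by
  simp only [relC, map_add, map_smul, shift_ket, dot_s_add, (D.act_s_eq_self_iff i ν).2 hν,
    sub_add_eq_add_sub]

lemma emod_pair_add_add_rho {i : Fin D.n} {ν : Λ} (hν : (l : ℤ) ∣ D.pair i ν) (lam : Λ) :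
    D.pair i (lam + ν + D.ρ) % l = D.pair i (lam + D.ρ) % l := by
  obtain ⟨m, hm⟩ := hν
  rw [pair_add_add_rho, hm, Int.add_mul_emod_self_left]

lemma dvd_pair_act_s {i : Fin D.n} {ν : Λ} (hν : (l : ℤ) ∣ D.pair i ν) :
    (l : ℤ) ∣ D.pair i (D.act (D.s i) ν) := by
  rw [pair_act_s]
  exact dvd_neg.2 hν

lemma shift_relA_add_mem {i : Fin D.n} {lam ν : Λ} (hd : (l : ℤ) ∣ D.pair i (lam + D.ρ))
    (hν : (l : ℤ) ∣ D.pair i ν) :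
    shift ν (D.relA i lam) + shift (D.act (D.s i) ν) (D.relA i lam) ∈ D.Idl l := by
  rw [shift_relA_add_shift_act_s]
  refine add_mem (D.relA_mem l ?_) (D.relA_mem l ?_) <;> rw [pair_add_add_rho]
  exacts [dvd_add hd hν, dvd_add hd (D.dvd_pair_act_s l hν)]

lemma shift_relA_mem {i : Fin D.n} {lam ν : Λ} (hd : (l : ℤ) ∣ D.pair i (lam + D.ρ))
    (hν : D.pair i ν = 0) : shift ν (D.relA i lam) ∈ D.Idl l := by
  rw [shift_relA_of_pair_eq_zero D hν]
  exact D.relA_mem l (by rwa [pair_add_add_rho, hν, add_zero])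

lemma shift_relB_add_mem (hl : 0 < l) {i : Fin D.n} {lam ν : Λ}
    (h₀ : 0 < D.pair i (lam + D.ρ)) (hlt : D.pair i (lam + D.ρ) < l)
    (hν : (l : ℤ) ∣ D.pair i ν) :
    shift ν (D.relB i lam) + shift (D.act (D.s i) ν) (D.relB i lam) ∈ D.Idl l := by
  rw [shift_relB_add_shift_act_s]
  refine D.relC_mem l hl ?_ h₀
  rw [D.emod_pair_add_add_rho l hν, Int.emod_eq_of_lt h₀.le hlt]

lemma shift_relB_mem {i : Fin D.n} {lam ν : Λ}
    (h₀ : 0 < D.pair i (lam + D.ρ)) (hlt : D.pair i (lam + D.ρ) < l)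
    (hν : D.pair i ν = 0) : shift ν (D.relB i lam) ∈ D.Idl l := by
  rw [shift_relB_of_pair_eq_zero D hν]
  have h : D.pair i (lam + ν + D.ρ) = D.pair i (lam + D.ρ) := by
    rw [pair_add_add_rho, hν, add_zero]
  exact D.relB_mem l (h ▸ h₀) (h ▸ hlt)

lemma shift_relC_emod_add_mem (hl : 0 < l) {i : Fin D.n} {lam ν : Λ}
    (hdvd : ¬ (l : ℤ) ∣ D.pair i (lam + D.ρ)) (hν : (l : ℤ) ∣ D.pair i ν) :
    shift ν (D.relC i lam (D.pair i (lam + D.ρ) % l)) +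
      shift (D.act (D.s i) ν) (D.relC i lam (D.pair i (lam + D.ρ) % l)) ∈ D.Idl l := by
  have hj := (Int.emod_pos_of_not_dvd hdvd).resolve_left (by omega)
  rw [shift_relC_add_shift_act_s]
  exact add_mem (D.relC_mem l hl (D.emod_pair_add_add_rho l hν lam) hj)
    (D.relC_mem l hl (D.emod_pair_add_add_rho l (D.dvd_pair_act_s l hν) lam) hj)

lemma shift_relC_emod_mem (hl : 0 < l) {i : Fin D.n} {lam ν : Λ}
    (hdvd : ¬ (l : ℤ) ∣ D.pair i (lam + D.ρ)) (hν : D.pair i ν = 0) :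
    shift ν (D.relC i lam (D.pair i (lam + D.ρ) % l)) ∈ D.Idl l := by
  rw [shift_relC_of_pair_eq_zero D hν]
  exact D.relC_mem l hl (by rw [pair_add_add_rho, hν, add_zero])
    ((Int.emod_pos_of_not_dvd hdvd).resolve_left (by omega))

lemma opX_eq_shift (μ : Λ) : D.opX l μ = shift (-(l • D.act D.w0 μ)) := by
  simp only [opX, shift, ← sub_eq_add_neg]
  rfl

lemma opX_single (μ lam : Λ) (c : K) :
    D.opX l μ (Finsupp.single lam c) = Finsupp.single (lam - l • D.act D.w0 μ) c := by
  rw [opX, Finsupp.lmapDomain_apply, Finsupp.mapDomain_single]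
  rfl

def actLin (g : Λ →₀ ℤ) : V Λ →ₗ[K] V Λ := g.sum fun μ c => c • D.opX l μ

lemma actLin_apply (g : Λ →₀ ℤ) (v : V Λ) :
    D.actLin l g v = g.sum fun μ c => c • D.opX l μ v :=
  LinearMap.finsupp_sum_apply _ _ _

lemma actZX_eq_actLin (g : Λ →₀ ℤ) : D.actZX l g = D.actLin l g :=
  funext fun v => (D.actLin_apply l g v).symm

lemma actLin_mem_of_shift {g : Λ →₀ ℤ} (hg : ∀ (w : W) (ν : Λ), g (D.act w ν) = g ν)
    (i : Fin D.n) {x : V Λ}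
    (hpair : ∀ ν, (l : ℤ) ∣ D.pair i ν → shift ν x + shift (D.act (D.s i) ν) x ∈ D.Idl l)
    (hfix : ∀ ν, D.pair i ν = 0 → shift ν x ∈ D.Idl l) : D.actLin l g x ∈ D.Idl l := by
  set u := D.w0⁻¹ * D.s i * D.w0 with hu_def
  set ν : Λ → Λ := fun μ => -(l • D.act D.w0 μ) with hν_def
  have hν : ∀ μ, ν (D.act u μ) = D.act (D.s i) (ν μ) := fun μ => by
    simp only [hν_def]
    rw [← act_mul_apply, show D.w0 * u = D.s i * D.w0 by rw [hu_def]; group, act_mul_apply,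
      map_neg, map_nsmul]
  have huu : ∀ μ, D.act u (D.act u μ) = μ := fun μ => by
    have hu : u * u = D.w0⁻¹ * (D.s i * D.s i) * D.w0 := by rw [hu_def]; group
    rw [← act_mul_apply, hu, D.s_sq, mul_one, inv_mul_cancel, act_one_apply]
  have hdvd : ∀ μ, (l : ℤ) ∣ D.pair i (ν μ) := fun μ =>
    ⟨-D.pair i (D.act D.w0 μ), by rw [hν_def, map_neg, map_nsmul, nsmul_eq_mul, mul_neg]⟩
  have hsum : D.actLin l g x = ∑ μ ∈ g.support, g μ • shift (ν μ) x := by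
    simp only [actLin_apply, Finsupp.sum, opX_eq_shift, hν_def]
  rw [hsum]
  refine Submodule.sum_mem_of_involution _ (D.act u) (fun μ hμ => ?_) (fun μ _ => huu μ)
    (fun μ _ => ?_) (fun μ _ hμ => ?_)
  · rw [Finsupp.mem_support_iff] at hμ ⊢
    rwa [hg]
  · rw [hg, hν, ← smul_add]
    exact zsmul_mem (hpair _ (hdvd μ)) _
  · have hfixed : D.act (D.s i) (ν μ) = ν μ := by rw [← hν, hμ]
    exact zsmul_mem (hfix _ ((D.act_s_eq_self_iff i _).1 hfixed)) _

lemma actLin_mem (hl : 0 < l) {g : Λ →₀ ℤ} (hg : ∀ (w : W) (ν : Λ), g (D.act w ν) = g ν)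
    {v : V Λ} (hv : v ∈ D.Idl l) : D.actLin l g v ∈ D.Idl l := by
  refine (Submodule.span_le (p := (D.Idl l).comap (D.actLin l g))).2 ?_ hv
  rintro x ((⟨i, lam, ⟨k, -, hk⟩, rfl⟩ | ⟨i, lam, h₀, hlt, rfl⟩) | ⟨i, lam, hgt, hdvd, rfl⟩)
  · have hd : (l : ℤ) ∣ D.pair i (lam + D.ρ) := ⟨k, by rw [hk, mul_comm]⟩
    exact D.actLin_mem_of_shift l hg i (fun ν hν => D.shift_relA_add_mem l hd hν)
      (fun ν hν => D.shift_relA_mem l hd hν)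
  · exact D.actLin_mem_of_shift l hg i (fun ν hν => D.shift_relB_add_mem l hl h₀ hlt hν)
      (fun ν hν => D.shift_relB_mem l h₀ hlt hν)
  · exact D.actLin_mem_of_shift l hg i (fun ν hν => D.shift_relC_emod_add_mem l hl hdvd hν)
      (fun ν hν => D.shift_relC_emod_mem l hl hdvd hν)

def barAddHom : V Λ →+ V Λ :=
  Finsupp.liftAddHom fun lam =>
    { toFun := fun c => (conjK c * D.barCoef l lam) • ket (D.dot D.w0 lam)
      map_zero' := by simp only [map_zero, zero_mul, zero_smul]
      map_add' := fun a b => by simp only [map_add, add_mul, add_smul] }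

lemma barAddHom_apply (v : V Λ) : D.barAddHom l v = D.barV l v := rfl

lemma barV_single (lam : Λ) (c : K) :
    D.barV l (Finsupp.single lam c) = (conjK c * D.barCoef l lam) • ket (D.dot D.w0 lam) :=
  Finsupp.sum_single_index (by simp only [map_zero, zero_mul, zero_smul])

lemma Ncount_sub_nsmul (lam μ : Λ) : D.Ncount l (lam - l • μ) = D.Ncount l lam := by
  unfold Ncount
  congr 1
  refine Finset.filter_congr fun f _ => ?_
  rw [sub_add_eq_add_sub, map_sub, map_nsmul, nsmul_eq_mul]
  exact dvd_sub_left (dvd_mul_right _ _)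

lemma barCoef_sub_nsmul (lam μ : Λ) : D.barCoef l (lam - l • μ) = D.barCoef l lam := by
  rw [barCoef, Ncount_sub_nsmul, barCoef]

lemma dot_sub_nsmul (w : W) (lam μ : Λ) :
    D.dot w (lam - l • μ) = D.dot w lam - l • D.act w μ := by
  rw [sub_eq_add_neg, dot_add, map_neg, map_nsmul, ← sub_eq_add_neg]

lemma barV_opX (μ : Λ) (v : V Λ) :
    D.barV l (D.opX l μ v) = D.opX l (D.act D.w0 μ) (D.barV l v) := by
  have h : (D.barAddHom l).comp (D.opX l μ).toAddMonoidHom =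
      (D.opX l (D.act D.w0 μ)).toAddMonoidHom.comp (D.barAddHom l) :=
    Finsupp.addHom_ext fun lam c => by
      simp only [AddMonoidHom.comp_apply, LinearMap.toAddMonoidHom_coe, barAddHom_apply,
        opX_single, barV_single, barCoef_sub_nsmul, dot_sub_nsmul, map_smul, ket]
  exact DFunLike.congr_fun h v

lemma barV_actLin {g : Λ →₀ ℤ} (hg : ∀ (w : W) (ν : Λ), g (D.act w ν) = g ν) (v : V Λ) :
    D.barV l (D.actLin l g v) = D.actLin l g (D.barV l v) := by
  have hinv : Finsupp.equivMapDomain (D.act D.w0).toEquiv g = g := by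
    ext μ
    rw [Finsupp.equivMapDomain_apply, ← hg D.w0]
    exact congrArg g ((D.act D.w0).apply_symm_apply μ)
  rw [actLin_apply, actLin_apply, ← barAddHom_apply, map_finsuppSum]
  conv_rhs => rw [← hinv, Finsupp.sum_equivMapDomain]
  simp only [map_zsmul, barAddHom_apply, barV_opX]
  rfl

end RootData

end

theorem statement5_general {Λ W : Type} [AddCommGroup Λ] [Group W] [Fintype W]
    (D : RootData Λ W) (l : ℕ) (hl : 0 < l)
    (C : V Λ) (hC : D.barV l C - C ∈ D.Idl l) :
    ∀ g : Λ →₀ ℤ, (∀ (w : W) (nu : Λ), g (Multiplicative.toAdd (D.σ w) nu) = g nu) →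
      D.barV l (D.actZX l g C) - D.actZX l g C ∈ D.Idl l := by
  intro g hg
  rw [D.actZX_eq_actLin, D.barV_actLin l hg, ← map_sub]
  exact D.actLin_mem l hl hg hC

/-- step (a) of the proof of Theorem 1.2: assume `bar(I) ⊆ I`.
If `C ∈ V` satisfies `bar(C) - C ∈ I`, then for every `g ∈ ℤ[X]^{W₀}` one has
`bar(g · C) - g · C ∈ I`; that is, the class of `g · C` in `F_l = V/I` is fixed
by the induced bar involution. -/
theorem statement5 {Λ W : Type} [AddCommGroup Λ] [Group W] [Fintype W]
    (D : RootData Λ W) (l : ℕ) (hl : 0 < l)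
    (hbar : ∀ x ∈ D.Idl l, D.barV l x ∈ D.Idl l)
    (C : V Λ) (hC : D.barV l C - C ∈ D.Idl l) :
    ∀ g : Λ →₀ ℤ, (∀ (w : W) (nu : Λ), g (Multiplicative.toAdd (D.σ w) nu) = g nu) →
      D.barV l (D.actZX l g C) - D.actZX l g C ∈ D.Idl l :=
  statement5_general D l hl C hC
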